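/- The bound γ_sp(G ⊙ v) ≤ γ_sp(G) + ⌊deg(v)/2⌋ − 1 is sharp: for the friendship graph F_n and v its center vertex of degree 2n, G ⊙ v is the star K_{1,2n}, and γ_sp(G ⊙ v) = 2n = γ_sp(F_n) + ⌊deg(v)/2⌋ − 1. -/

import Mathlib

/-- `S` is a super dominating set of `G`: it is dominating, and for every `u ∉ S`
there is `v ∈ S` whose neighbours outside `S` are exactly `{u}`. -/
def IsSuperDominatingSet {V : Type*} (G : SimpleGraph V) (S : Finset V) : Prop :=
  (∀ u ∉ S, ∃ v ∈ S, G.Adj v u) ∧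
  ∀ u ∉ S, ∃ v ∈ S, ∀ w, (G.Adj v w ∧ w ∉ S) ↔ w = u

/-- The super domination number of `G`. -/
noncomputable def superDominationNumber {V : Type*} [Fintype V] (G : SimpleGraph V) : ℕ :=
  sInf {n | ∃ S : Finset V, IsSuperDominatingSet G S ∧ S.card = n}

/-- `G ⊙ v`: the graph obtained from `G` by removing all edges between
any pair of neighbours of `v`. -/
def odot {V : Type*} (G : SimpleGraph V) (v : V) : SimpleGraph V where
  Adj a b := G.Adj a b ∧ ¬(G.Adj v a ∧ G.Adj v b)
  symm := ⟨fun a b ⟨h1, h2⟩ => ⟨h1.symm, fun ⟨p, q⟩ => h2 ⟨q, p⟩⟩⟩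
  loopless := ⟨fun a ⟨h, _⟩ => h.ne rfl⟩

/-- The star graph `K_{1,n}`: a center (`none`) adjacent to `n` leaves. -/
def starGraph (n : ℕ) : SimpleGraph (Option (Fin n)) :=
  SimpleGraph.fromRel (fun u _ => u = none)

/-- The friendship graph `F_n`: `n` triangles sharing the common center `none`. -/
def friendshipGraph (n : ℕ) : SimpleGraph (Option (Fin n × Fin 2)) :=
  SimpleGraph.fromRel (fun u w =>
    u = none ∨ ∃ p q : Fin n × Fin 2, u = some p ∧ w = some q ∧ p.1 = q.1)


/-!
A super dominating set `S` injects its complement into itself: each `u ∉ S` is sent to a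
vertex of `S` whose only neighbour outside `S` is `u`. Hence `γ_sp(G) ≥ |V|/2`, and the
center together with one vertex of each triangle shows `γ_sp(F_n) = n + 1`. Removing the edges
inside the neighbourhood of the center of `F_n` leaves the star `K_{1,2n}`; there a leaf outside
`S` can only be super dominated by the center, so at most one vertex lies outside `S`, and
`γ_sp(K_{1,m}) = m` for `m ≥ 1`.
-/

open Finset

section SuperDomination

variable {V W : Type*} {G : SimpleGraph V} {H : SimpleGraph W}

theorem IsSuperDominatingSet.univ [Fintype V] : IsSuperDominatingSet G Finset.univ :=
  ⟨fun u hu => absurd (mem_univ u) hu, fun u hu => absurd (mem_univ u) hu⟩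

theorem IsSuperDominatingSet.map [DecidableEq W] {S : Finset V} (e : G ≃g H)
    (hS : IsSuperDominatingSet G S) : IsSuperDominatingSet H (S.map e.toEquiv.toEmbedding) := by
  have mem_map_iff (u : V) : e u ∈ S.map e.toEquiv.toEmbedding ↔ u ∈ S := mem_map' _
  refine ⟨fun u hu => ?_, fun u hu => ?_⟩
  · obtain ⟨u, rfl⟩ := e.surjective u
    obtain ⟨v, hvS, hvu⟩ := hS.1 u (by rwa [← mem_map_iff])
    exact ⟨e v, (mem_map_iff v).2 hvS, e.map_adj_iff.2 hvu⟩
  · obtain ⟨u, rfl⟩ := e.surjective u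
    obtain ⟨v, hvS, hv⟩ := hS.2 u (by rwa [← mem_map_iff])
    refine ⟨e v, (mem_map_iff v).2 hvS, fun w => ?_⟩
    obtain ⟨w, rfl⟩ := e.surjective w
    rw [e.map_adj_iff, mem_map_iff, hv, e.apply_eq_iff_eq]

section Fintype

variable [Fintype V] [Fintype W]

theorem superDominationNumber_le {S : Finset V} (hS : IsSuperDominatingSet G S) :
    superDominationNumber G ≤ #S :=
  Nat.sInf_le ⟨S, hS, rfl⟩

theorem exists_isSuperDominatingSet_card_eq_superDominationNumber (G : SimpleGraph V) :
    ∃ S : Finset V, IsSuperDominatingSet G S ∧ #S = superDominationNumber G :=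
  Nat.sInf_mem (s := {k | ∃ S : Finset V, IsSuperDominatingSet G S ∧ #S = k})
    ⟨_, univ, .univ, rfl⟩

theorem le_superDominationNumber {k : ℕ}
    (h : ∀ S : Finset V, IsSuperDominatingSet G S → k ≤ #S) :
    k ≤ superDominationNumber G := by
  obtain ⟨S, hS, hcard⟩ := exists_isSuperDominatingSet_card_eq_superDominationNumber G
  exact hcard ▸ h S hS

theorem SimpleGraph.Iso.superDominationNumber_le (e : G ≃g H) :
    superDominationNumber H ≤ superDominationNumber G := by
  classical
  obtain ⟨S, hS, hcard⟩ := exists_isSuperDominatingSet_card_eq_superDominationNumber G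
  exact (_root_.superDominationNumber_le (hS.map e)).trans (by rw [card_map, hcard])

theorem SimpleGraph.Iso.superDominationNumber_eq (e : G ≃g H) :
    superDominationNumber G = superDominationNumber H :=
  le_antisymm e.symm.superDominationNumber_le e.superDominationNumber_le

theorem IsSuperDominatingSet.card_compl_le [DecidableEq V] {S : Finset V}
    (hS : IsSuperDominatingSet G S) : #Sᶜ ≤ #S := by
  choose f hfS hf using hS.2
  let g (u : V) : V := if hu : u ∈ S then u else f u hu
  refine card_le_card_of_injOn g (fun u hu => ?_) (fun u hu w hw hgw => ?_)
  · have hu : u ∉ S := mem_compl.1 hu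
    simpa [g, hu] using hfS u hu
  · have hu : u ∉ S := mem_compl.1 hu
    have hw : w ∉ S := mem_compl.1 hw
    simp only [g, hu, hw, dite_false] at hgw
    exact (hf w hw u).1 (hgw ▸ (hf u hu u).2 rfl)

theorem IsSuperDominatingSet.card_le_two_mul_card [DecidableEq V] {S : Finset V}
    (hS : IsSuperDominatingSet G S) : Fintype.card V ≤ 2 * #S := by
  have := card_compl_add_card S
  have := hS.card_compl_le
  omega

end Fintype

end SuperDomination

section Star

theorem starGraph_adj {m : ℕ} {a b : Option (Fin m)} :
    (starGraph m).Adj a b ↔ a ≠ b ∧ (a = none ∨ b = none) := by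
  simp [starGraph]

theorem IsSuperDominatingSet.card_compl_le_one_of_starGraph {m : ℕ} {S : Finset (Option (Fin m))}
    (hS : IsSuperDominatingSet (starGraph m) S) : #Sᶜ ≤ 1 := by
  have center_of_leaf (p : Fin m) (hp : some p ∉ S) :
      none ∈ S ∧ ∀ w, (starGraph m).Adj none w ∧ w ∉ S ↔ w = some p := by
    obtain ⟨v, hvS, hv⟩ := hS.2 (some p) hp
    have hvp := ((hv (some p)).2 rfl).1
    rw [starGraph_adj] at hvp
    obtain rfl : v = none := hvp.2.resolve_right (Option.some_ne_none p)
    exact ⟨hvS, hv⟩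
  refine card_le_one.2 fun a ha b hb => ?_
  rw [mem_compl] at ha hb
  cases a with
  | none => cases b with
    | none => rfl
    | some q => exact absurd (center_of_leaf q hb).1 ha
  | some p => cases b with
    | none => exact absurd (center_of_leaf p ha).1 hb
    | some q => exact ((center_of_leaf p ha).2 (some q) |>.1 ⟨by simp [starGraph_adj], hb⟩).symm

theorem superDominationNumber_starGraph {m : ℕ} (hm : 1 ≤ m) :
    superDominationNumber (starGraph m) = m := by
  refine le_antisymm ?_ (le_superDominationNumber fun S hS => ?_)
  · have hS : IsSuperDominatingSet (starGraph m) (univ.erase none) := by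
      have leaf_mem : (some ⟨0, hm⟩ : Option (Fin m)) ∈ univ.erase none := by simp
      refine ⟨fun u hu => ?_, fun u hu => ?_⟩
      · exact ⟨_, leaf_mem, by simp_all [starGraph_adj]⟩
      · refine ⟨_, leaf_mem, fun w => ?_⟩
        simp only [mem_erase, mem_univ, and_true, not_not] at hu ⊢
        subst hu
        simp only [starGraph_adj, reduceCtorEq, false_or]
        exact ⟨And.right, fun hw => ⟨⟨hw ▸ Option.some_ne_none _, hw⟩, hw⟩⟩
    simpa using superDominationNumber_le hS
  · have := card_compl_add_card S
    have := hS.card_compl_le_one_of_starGraph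
    simp only [Fintype.card_option, Fintype.card_fin] at *
    omega

end Star

section Friendship

variable {n : ℕ}

theorem friendshipGraph_none_adj {x : Option (Fin n × Fin 2)} :
    (friendshipGraph n).Adj none x ↔ x ≠ none := by
  simp [friendshipGraph, eq_comm]

theorem friendshipGraph_some_adj_some {p q : Fin n × Fin 2} :
    (friendshipGraph n).Adj (some p) (some q) ↔ p ≠ q ∧ p.1 = q.1 := by
  simp only [friendshipGraph, SimpleGraph.fromRel_adj, ne_eq, Option.some.injEq, reduceCtorEq,
    false_or, exists_and_left, exists_eq_left', eq_comm (a := q.1), or_self]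

theorem card_friendshipGraph_vertices :
    Fintype.card (Option (Fin n × Fin 2)) = 2 * n + 1 := by
  simp [mul_comm]

theorem ncard_neighborSet_friendshipGraph_none :
    ((friendshipGraph n).neighborSet none).ncard = 2 * n := by
  have : (friendshipGraph n).neighborSet none = {none}ᶜ := by
    ext x
    simp [friendshipGraph_none_adj]
  rw [this, Set.ncard_compl, Set.ncard_singleton, Nat.card_eq_fintype_card,
    card_friendshipGraph_vertices, Nat.add_sub_cancel]

theorem odot_friendshipGraph_adj {a b : Option (Fin n × Fin 2)} :
    (odot (friendshipGraph n) none).Adj a b ↔ a ≠ b ∧ (a = none ∨ b = none) := by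
  show (friendshipGraph n).Adj a b ∧ _ ↔ _
  cases a <;> cases b <;> simp [friendshipGraph_none_adj, (friendshipGraph n).adj_comm _ none]

def odotFriendshipGraphIsoStarGraph : odot (friendshipGraph n) none ≃g starGraph (2 * n) where
  toEquiv := Equiv.optionCongr (finProdFinEquiv.trans (finCongr (mul_comm n 2)))
  map_rel_iff' {a b} := by
    rw [odot_friendshipGraph_adj, starGraph_adj]
    cases a <;> cases b <;> simp

theorem superDominationNumber_friendshipGraph :
    superDominationNumber (friendshipGraph n) = n + 1 := by
  refine le_antisymm ?_ (le_superDominationNumber fun S hS => ?_)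
  · let S : Finset (Option (Fin n × Fin 2)) := insert none (univ.image fun i => some (i, 0))
    have hS : IsSuperDominatingSet (friendshipGraph n) S := by
      refine ⟨fun u hu => ⟨none, mem_insert_self _ _, friendshipGraph_none_adj.2 ?_⟩,
        fun u hu => ?_⟩
      · rintro rfl
        exact hu (mem_insert_self _ _)
      · obtain _ | ⟨i, j⟩ := u
        · exact absurd (mem_insert_self _ _) hu
        fin_cases j
        · simp [S] at hu
        refine ⟨some (i, 0), by simp [S], fun w => ?_⟩
        obtain _ | ⟨k, l⟩ := w
        · simp [S]
        fin_cases l <;> simp [S, friendshipGraph_some_adj_some, eq_comm]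
    calc superDominationNumber (friendshipGraph n) ≤ #S := superDominationNumber_le hS
      _ = n + 1 := by
        rw [card_insert_of_notMem (by simp),
          card_image_of_injective _ fun i j h => by simpa using h, card_univ, Fintype.card_fin]
  · have := hS.card_le_two_mul_card
    rw [card_friendshipGraph_vertices] at this
    omega

end Friendship

/-- sharpness of the bound of Theorem `Godotv`: for the friendship graph
`F_n` with center `v` (of degree `2n`), `F_n ⊙ v` is the star `K_{1,2n}` and
`γ_sp(F_n ⊙ v) = 2n = γ_sp(F_n) + ⌊deg(v)/2⌋ - 1`. -/
theorem stmt_9 (n : ℕ) (hn : 1 ≤ n) :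
    ((friendshipGraph n).neighborSet none).ncard = 2 * n ∧
    Nonempty (odot (friendshipGraph n) none ≃g starGraph (2 * n)) ∧
    superDominationNumber (odot (friendshipGraph n) none) = 2 * n ∧
    2 * n = superDominationNumber (friendshipGraph n) +
      ((friendshipGraph n).neighborSet none).ncard / 2 - 1 := by
  refine ⟨ncard_neighborSet_friendshipGraph_none, ⟨odotFriendshipGraphIsoStarGraph⟩, ?_, ?_⟩
  · rw [odotFriendshipGraphIsoStarGraph.superDominationNumber_eq,
      superDominationNumber_starGraph (by omega)]
  · rw [ncard_neighborSet_friendshipGraph_none, superDominationNumber_friendshipGraph]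
    omega
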